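/- Let R be the Novikov ring with residue field k. If (C, d) is a bounded chain complex of finite-rank free R-modules such that the complex C ⊗_R k is acyclic, then C itself is acyclic. -/

import Mathlib

open CategoryTheory Limits

/-- The Novikov ring over a field k, modelled as Hahn series with exponents in ℝ≥0. -/
abbrev Nov (k : Type) [Field k] : Type := HahnSeries NNReal k

/-- The maximal ideal t^{>0}R of the Novikov ring, generated by the monomials
t^λ, λ > 0. -/
noncomputable def NovMax (k : Type) [Field k] : Ideal (Nov k) :=
  Ideal.span { x : Nov k | ∃ l : NNReal, 0 < l ∧ x = HahnSeries.single l 1 }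

/-- The residue field k = R / t^{>0}R of the Novikov ring. -/
abbrev NovRes (k : Type) [Field k] : Type := Nov k ⧸ NovMax k

noncomputable instance extendScalarsAdditive (R S : Type) [CommRing R] [CommRing S]
    (f : R →+* S) : (ModuleCat.extendScalars f).Additive := by
  exact (ModuleCat.extendRestrictScalarsAdj f).left_adjoint_additive

/-!
The Novikov ring is local with residue map `Ideal.Quotient.mk (NovMax k)`: a series with nonzero
constant term is a unit, and a series without one is `t^λ` times a series. Over a local ring one
builds a contracting homotopy of `C` by downward induction from its top degree. In degree `i`,
exactness of `C ⊗ k` lets the defect `1 - τ d` of the homotopy built so far be factored through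
`d` modulo the maximal ideal; lifting the factorisation (the modules are free) gives an
endomorphism of `C_i` that is the identity modulo the maximal ideal, hence has unit determinant
and is invertible, and composing with its inverse extends the homotopy to degree `i`.
-/

universe u

theorem LinearMap.exists_comp_eq_of_ker_le {K V V' W : Type*} [DivisionRing K]
    [AddCommGroup V] [Module K V] [AddCommGroup V'] [Module K V'] [AddCommGroup W] [Module K W]
    (d : V →ₗ[K] V') (p : V →ₗ[K] W) (h : LinearMap.ker d ≤ LinearMap.ker p) :
    ∃ s : V' →ₗ[K] W, s ∘ₗ d = p := by
  obtain ⟨g, hg⟩ := ((LinearMap.ker d).liftQ d le_rfl).exists_leftInverse_of_injective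
    (Submodule.ker_liftQ_eq_bot _ _ _ le_rfl)
  refine ⟨(LinearMap.ker d).liftQ p h ∘ₗ g, LinearMap.ext fun v ↦ ?_⟩
  have hv : g (d v) = Submodule.Quotient.mk v := LinearMap.congr_fun hg (Submodule.Quotient.mk v)
  simp [hv]

namespace HahnSeries

variable {Γ R : Type*} [AddCommMonoid Γ] [LinearOrder Γ] [IsOrderedCancelAddMonoid Γ]
  [CanonicallyOrderedAdd Γ]

theorem coeff_zero_mul [NonUnitalNonAssocSemiring R] (x y : HahnSeries Γ R) :
    (x * y).coeff 0 = x.coeff 0 * y.coeff 0 := by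
  rw [coeff_mul, Finset.sum_eq_single (0, 0)]
  · rintro ⟨a, b⟩ hab hne
    obtain ⟨-, -, hab⟩ := Finset.mem_antidiagonal.mp hab
    exact absurd (Prod.ext (add_eq_zero.mp hab).1 (add_eq_zero.mp hab).2) hne
  · intro h
    by_contra hxy
    exact h (Finset.mem_antidiagonal.mpr ⟨left_ne_zero_of_mul hxy, right_ne_zero_of_mul hxy,
      add_zero 0⟩)

noncomputable def constantCoeff [Semiring R] : HahnSeries Γ R →+* R where
  toFun x := x.coeff 0
  map_one' := by simp
  map_mul' := coeff_zero_mul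
  map_zero' := rfl
  map_add' _ _ := rfl

theorem isUnit_of_isUnit_coeff_zero [CommRing R] {x : HahnSeries Γ R}
    (hx : IsUnit (x.coeff 0)) : IsUnit x := by
  nontriviality R
  have horder : x.order = 0 := nonpos_iff_eq_zero.mp (order_le_of_coeff_ne_zero hx.ne_zero)
  refine isUnit_of_isUnit_leadingCoeff_AddUnitOrder ?_ (horder ▸ isAddUnit_zero)
  rwa [leadingCoeff_eq, horder]

theorem exists_eq_single_mul [Sub Γ] [OrderedSub Γ] [Semiring R] (x : HahnSeries Γ R) {o : Γ}
    (hx : ∀ a < o, x.coeff a = 0) : ∃ y, x = single o 1 * y := by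
  refine ⟨⟨fun a ↦ x.coeff (a + o), ?_⟩, ?_⟩
  · exact (x.isPWO_support.image_of_monotone (f := fun a ↦ a - o)
      fun a b hab ↦ tsub_le_tsub_right hab o).mono fun a ha ↦ ⟨a + o, ha, add_tsub_cancel_right a o⟩
  ext a
  rcases lt_or_ge a o with hao | hoa
  · rw [hx a hao, eq_comm, ← not_ne_iff, ← mem_support]
    intro ha
    obtain ⟨b, hb, c, -, rfl⟩ := support_mul_subset ha
    rw [support_single_subset hb] at hao
    exact le_self_add.not_gt hao
  · rw [← tsub_add_cancel_of_le hoa, coeff_single_mul_add, one_mul]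

end HahnSeries

section Novikov

variable {k : Type} [Field k]

theorem novMax_eq_ker_constantCoeff :
    NovMax k = RingHom.ker (HahnSeries.constantCoeff : Nov k →+* k) := by
  apply le_antisymm
  · rw [NovMax, Ideal.span_le]
    rintro _ ⟨l, hl, rfl⟩
    exact HahnSeries.coeff_single_of_ne hl.ne
  · intro x (hx : x.coeff 0 = 0)
    rcases eq_or_ne x 0 with rfl | hx0
    · exact zero_mem _
    have hord : 0 < x.order :=
      pos_iff_ne_zero.mpr fun h ↦ hx0 (HahnSeries.coeff_order_eq_zero.mp (h ▸ hx))
    obtain ⟨y, hy⟩ := x.exists_eq_single_mul fun a ha ↦ HahnSeries.coeff_eq_zero_of_lt_order ha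
    rw [hy]
    exact Ideal.mul_mem_right _ _ (Ideal.subset_span ⟨_, hord, rfl⟩)

instance : (NovMax k).IsMaximal :=
  novMax_eq_ker_constantCoeff (k := k) ▸ RingHom.ker_isMaximal_of_surjective _
    fun c ↦ ⟨HahnSeries.C c, by simp [HahnSeries.constantCoeff]⟩

instance : IsLocalHom (Ideal.Quotient.mk (NovMax k)) where
  map_nonunit _ hx :=
    HahnSeries.isUnit_of_isUnit_coeff_zero <| hx.map <| Ideal.Quotient.lift (NovMax k)
      HahnSeries.constantCoeff novMax_eq_ker_constantCoeff.le

end Novikov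

namespace ModuleCat

variable {R K : Type} [CommRing R] [CommRing K] (q : R →+* K)

theorem extendRestrictScalarsAdj_unit_app_surjective (hq : Function.Surjective q)
    (M : ModuleCat.{u} R) :
    Function.Surjective ((extendRestrictScalarsAdj q).unit.app M) := by
  intro z
  induction z using TensorProduct.induction_on with
  | zero => exact ⟨0, map_zero _⟩
  | tmul c m =>
    obtain ⟨r, rfl⟩ := hq c
    refine ⟨r • m, ?_⟩
    rw [map_smul, restrictScalars.smul_def, extendRestrictScalarsAdj_unit_app_apply]
    exact (ExtendScalars.smul_tmul q (q r) 1 m).trans (by rw [mul_one]; rfl)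
  | add x y hx hy =>
    obtain ⟨m, rfl⟩ := hx
    obtain ⟨n, rfl⟩ := hy
    exact ⟨m + n, map_add _ _ _⟩

theorem extendScalars_map_surjective (hq : Function.Surjective q) {M N : ModuleCat.{u} R}
    [Module.Free R M] (φ : (extendScalars q).obj M ⟶ (extendScalars q).obj N) :
    ∃ σ : M ⟶ N, (extendScalars q).map σ = φ := by
  let adj := extendRestrictScalarsAdj q
  let b := Module.Free.chooseBasis R M
  choose n hn using fun j ↦
    extendRestrictScalarsAdj_unit_app_surjective q hq N (φ (adj.unit.app M (b j)))
  refine ⟨ofHom (b.constr ℕ n), (adj.homEquiv _ _).injective ?_⟩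
  rw [← Category.comp_id ((extendScalars q).map _), adj.homEquiv_naturality_left,
    adj.homEquiv_id]
  refine hom_ext (b.ext fun j ↦ ?_)
  simpa [b.constr_basis, adj.homEquiv_unit] using hn j

theorem isIso_of_isIso_extendScalars_map [IsLocalHom q] {M : ModuleCat.{u} R}
    [Module.Free R M] [Module.Finite R M] (u : M ⟶ M)
    [IsIso ((extendScalars q).map u)] : IsIso u := by
  have hdet : IsUnit (LinearMap.det ((extendScalars q).map u).hom) :=
    (asIso ((extendScalars q).map u)).toLinearEquiv.isUnit_det'
  -- the algebra structure under which `(extendScalars q).map u` is `u.hom.baseChange K`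
  let := ((algebraMap K K).comp q).toAlgebra
  rw [show LinearMap.det ((extendScalars q).map u).hom = q (LinearMap.det u.hom) from
    LinearMap.det_baseChange u.hom] at hdet
  rw [ConcreteCategory.isIso_iff_bijective, ← Module.End.isUnit_iff,
    LinearMap.isUnit_iff_isUnit_det]
  exact hdet.of_map

end ModuleCat

theorem HomologicalComplex.moduleCat_exactAt_iff_ker_sub_range {R : Type*} [Ring R]
    (C : HomologicalComplex (ModuleCat.{u} R) (ComplexShape.down ℤ)) (i : ℤ) :
    C.ExactAt i ↔ LinearMap.ker (C.d i (i - 1)).hom ≤ LinearMap.range (C.d (i + 1) i).hom := by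
  rw [C.exactAt_iff' (i + 1) i (i - 1) (by simp) (by simp),
    ShortComplex.moduleCat_exact_iff_ker_sub_range]
  rfl

theorem HomologicalComplex.exactAt_of_d_comp_add_comp_d_eq_id {R : Type*} [Ring R]
    (C : HomologicalComplex (ModuleCat.{u} R) (ComplexShape.down ℤ)) (i : ℤ)
    (τ₁ : C.X (i - 1) ⟶ C.X i) (τ₂ : C.X i ⟶ C.X (i + 1))
    (h : C.d i (i - 1) ≫ τ₁ + τ₂ ≫ C.d (i + 1) i = 𝟙 _) : C.ExactAt i := by
  rw [C.moduleCat_exactAt_iff_ker_sub_range]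
  intro x (hx : (C.d i (i - 1)).hom x = 0)
  refine ⟨τ₂.hom x, ?_⟩
  simpa [hx] using congr_arg (fun f ↦ f.hom x) h

section LocalResidueField

variable {R K : Type} [CommRing R] [Field K] (q : R →+* K)

theorem exists_comp_add_comp_eq_id (hq : Function.Surjective q) [IsLocalHom q]
    {Y X W : ModuleCat.{u} R} [Module.Free R X] [Module.Finite R X] [Module.Free R W]
    (d₂ : Y ⟶ X) (d₁ : X ⟶ W) (t : X ⟶ Y) (hd : d₂ ≫ d₁ = 0) (ht : d₂ ≫ t ≫ d₂ = d₂)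
    (hexact : LinearMap.ker ((ModuleCat.extendScalars q).map d₁).hom ≤
      LinearMap.range ((ModuleCat.extendScalars q).map d₂).hom) :
    ∃ s : W ⟶ X, d₁ ≫ s + t ≫ d₂ = 𝟙 X := by
  set F := ModuleCat.extendScalars q
  have hπ : d₂ ≫ (𝟙 X - t ≫ d₂) = 0 := by simp [Preadditive.comp_sub, ht]
  have hker : LinearMap.ker (F.map d₁).hom ≤ LinearMap.ker (F.map (𝟙 X - t ≫ d₂)).hom := by
    rintro _ hx
    obtain ⟨y, rfl⟩ := hexact hx
    rw [LinearMap.mem_ker, ← LinearMap.comp_apply, ← ModuleCat.hom_comp, ← F.map_comp, hπ,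
      F.map_zero]
    rfl
  obtain ⟨s, hs⟩ := LinearMap.exists_comp_eq_of_ker_le _ _ hker
  obtain ⟨σ, hσ⟩ :=
    ModuleCat.extendScalars_map_surjective q hq (ModuleCat.ofHom (X := F.obj W) (Y := F.obj X) s)
  set u := t ≫ d₂ + d₁ ≫ σ
  have hFu : F.map u = 𝟙 _ := by
    have : F.map d₁ ≫ F.map σ = F.map (𝟙 X - t ≫ d₂) := by
      rw [hσ]
      exact ModuleCat.hom_ext hs
    simp only [u, F.map_add, F.map_comp, this, F.map_sub, F.map_id]
    abel
  have : IsIso (F.map u) := hFu ▸ inferInstance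
  have : IsIso u := ModuleCat.isIso_of_isIso_extendScalars_map q u
  have hdu : d₂ ≫ inv u = d₂ := by
    rw [IsIso.comp_inv_eq]
    simp [u, ht, reassoc_of% hd]
  refine ⟨σ ≫ inv u, ?_⟩
  calc d₁ ≫ σ ≫ inv u + t ≫ d₂ = (u - t ≫ d₂) ≫ inv u + t ≫ d₂ := by simp [u]
    _ = 𝟙 X := by rw [Preadditive.sub_comp, IsIso.hom_inv_id, Category.assoc, hdu]; abel

theorem exists_contraction_above (hq : Function.Surjective q) [IsLocalHom q]
    (C : HomologicalComplex (ModuleCat.{u} R) (ComplexShape.down ℤ))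
    [∀ i, Module.Free R (C.X i)] [∀ i, Module.Finite R (C.X i)]
    {N : ℤ} (hN : ∀ i, N < i → IsZero (C.X i))
    (hexact : ∀ i, (((ModuleCat.extendScalars q).mapHomologicalComplex _).obj C).ExactAt i)
    (n : ℕ) : ∃ τ : ∀ i j, C.X i ⟶ C.X j,
      ∀ i, N - n < i → C.d i (i - 1) ≫ τ (i - 1) i + τ i (i + 1) ≫ C.d (i + 1) i = 𝟙 _ := by
  induction n with
  | zero => exact ⟨fun _ _ ↦ 0, fun i hi ↦ (hN i (by omega)).eq_of_src _ _⟩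
  | succ n ih =>
    obtain ⟨τ, hτ⟩ := ih
    set i₀ := N - n
    have ht : C.d (i₀ + 1) i₀ ≫ τ i₀ (i₀ + 1) ≫ C.d (i₀ + 1) i₀ = C.d (i₀ + 1) i₀ := by
      have h := hτ (i₀ + 1) (by omega)
      rw [add_sub_cancel_right] at h
      rw [← Category.assoc, eq_sub_of_add_eq h, Preadditive.sub_comp, Category.assoc, C.d_comp_d,
        comp_zero, sub_zero, Category.id_comp]
    obtain ⟨s, hs⟩ := exists_comp_add_comp_eq_id q hq _ _ _ (C.d_comp_d _ _ _) ht
      ((HomologicalComplex.moduleCat_exactAt_iff_ker_sub_range _ i₀).mp (hexact i₀))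
    refine ⟨Function.update τ (i₀ - 1) (Function.update (τ (i₀ - 1)) i₀ s), fun i hi ↦ ?_⟩
    rcases (show i = i₀ ∨ i₀ < i by omega) with rfl | hi
    · simpa [Function.update_of_ne (show i₀ ≠ i₀ - 1 by omega)] using hs
    · simpa [Function.update_of_ne (show i - 1 ≠ i₀ - 1 by omega),
        Function.update_of_ne (show i ≠ i₀ - 1 by omega)] using hτ i (by omega)

theorem exactAt_of_exactAt_extendScalars (hq : Function.Surjective q) [IsLocalHom q]
    (C : HomologicalComplex (ModuleCat.{u} R) (ComplexShape.down ℤ))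
    [∀ i, Module.Free R (C.X i)] [∀ i, Module.Finite R (C.X i)]
    (hbdd : ∃ N, ∀ i, N < i → IsZero (C.X i))
    (hexact : ∀ i, (((ModuleCat.extendScalars q).mapHomologicalComplex _).obj C).ExactAt i)
    (i : ℤ) : C.ExactAt i := by
  obtain ⟨N, hN⟩ := hbdd
  obtain ⟨τ, hτ⟩ := exists_contraction_above q hq C hN hexact (N - i + 1).toNat
  exact C.exactAt_of_d_comp_add_comp_d_eq_id i _ _ (hτ i (by omega))

end LocalResidueField

/-- If (C,d) is a bounded chain complex of finite-rank free modules over the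
Novikov ring R whose base change C ⊗_R k to the residue field is acyclic, then
C itself is acyclic. -/
theorem stmt_2 (k : Type) [Field k]
    (C : HomologicalComplex (ModuleCat (Nov k)) (ComplexShape.down ℤ))
    (hfree : ∀ i, Module.Free (Nov k) (C.X i))
    (hfin : ∀ i, Module.Finite (Nov k) (C.X i))
    (hbdd : ∃ N : ℤ, ∀ i : ℤ, N < |i| → IsZero (C.X i))
    (hacyclic : ∀ i : ℤ,
      (((ModuleCat.extendScalars
          (Ideal.Quotient.mk (NovMax k))).mapHomologicalComplex
            (ComplexShape.down ℤ)).obj C).ExactAt i) :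
    ∀ i : ℤ, C.ExactAt i := by
  obtain ⟨N, hN⟩ := hbdd
  let := Ideal.Quotient.field (NovMax k)
  exact exactAt_of_exactAt_extendScalars _ Ideal.Quotient.mk_surjective C
    ⟨N, fun i hi ↦ hN i (hi.trans_le (le_abs_self i))⟩ hacyclic
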